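/- arXiv:2112.09617 — 6 statements merged into one kernel-verified Lean document; each statement's English description precedes it below -/
import Mathlib

section
/- Let D be a database, Σ a set of FDs, and {D₁,…,Dₙ} a partition of D such that for all distinct i,j ∈ [n] and all facts f ∈ D_i and g ∈ D_j, the two-fact database {f,g} satisfies Σ. Then for every database D′: D′ is a repair of D w.r.t. Σ if and only if D′ = D′₁ ∪ ⋯ ∪ D′ₙ where, for each i ∈ [n], D′_i is a repair of D_i w.r.t. Σ. -/
open scoped Classical

/-- A fact over relation name `rel`, assigning a constant to each attribute. -/
structure DBFact (Rel Attr Const : Type*) where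
  rel : Rel
  val : Attr → Const

/-- A functional dependency `rel : lhs → rhs`. -/
structure DBFD (Rel Attr : Type*) where
  rel : Rel
  lhs : Set Attr
  rhs : Set Attr

/-- A term of a conjunctive query: a variable or a constant. -/
inductive DBTerm (Var Const : Type*) where
  | var : Var → DBTerm Var Const
  | const : Const → DBTerm Var Const

/-- An atom of a conjunctive query. -/
structure DBAtom (Rel Attr Var Const : Type*) where
  rel : Rel
  val : Attr → DBTerm Var Const

variable {Rel Attr Var Const : Type*}

/-- A database satisfies a single FD. -/
def satFD (D : Finset (DBFact Rel Attr Const)) (φ : DBFD Rel Attr) : Prop :=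
  ∀ f ∈ D, ∀ g ∈ D, f.rel = φ.rel → g.rel = φ.rel →
    (∀ A ∈ φ.lhs, f.val A = g.val A) → ∀ A ∈ φ.rhs, f.val A = g.val A

/-- A database satisfies a set of FDs. -/
def satFDs (D : Finset (DBFact Rel Attr Const)) (S : Set (DBFD Rel Attr)) : Prop :=
  ∀ φ ∈ S, satFD D φ

/-- `E` is a repair of `D` w.r.t. `S`: an inclusion-maximal consistent subset of `D`. -/
def isRepair (S : Set (DBFD Rel Attr)) (D E : Finset (DBFact Rel Attr Const)) : Prop :=
  E ⊆ D ∧ satFDs E S ∧ ∀ F, E ⊆ F → F ⊆ D → satFDs F S → F = E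

/-- The set of repairs of `D` w.r.t. `S`. -/
noncomputable def rep (D : Finset (DBFact Rel Attr Const)) (S : Set (DBFD Rel Attr)) :
    Finset (Finset (DBFact Rel Attr Const)) :=
  D.powerset.filter (fun E => isRepair S D E)

/-- Applying a homomorphism (a map from variables to constants) to an atom yields a fact. -/
def applyHom (h : Var → Const) (α : DBAtom Rel Attr Var Const) : DBFact Rel Attr Const :=
  ⟨α.rel, fun A => match α.val A with
    | DBTerm.var v => h v
    | DBTerm.const c => c⟩

/-- `D ⊨ Q`: there is a homomorphism from the CQ `Q` into `D`. -/
def entails (D : Finset (DBFact Rel Attr Const)) (Q : Finset (DBAtom Rel Attr Var Const)) :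
    Prop :=
  ∃ h : Var → Const, ∀ α ∈ Q, applyHom h α ∈ D

/-- The repairs of `D` w.r.t. `S` that entail `Q`. -/
noncomputable def repQ (D : Finset (DBFact Rel Attr Const)) (S : Set (DBFD Rel Attr))
    (Q : Finset (DBAtom Rel Attr Var Const)) : Finset (Finset (DBFact Rel Attr Const)) :=
  (rep D S).filter (fun E => entails E Q)

/-- The relative frequency of `Q` w.r.t. `D` and `S`. -/
noncomputable def rfreq (Q : Finset (DBAtom Rel Attr Var Const))
    (D : Finset (DBFact Rel Attr Const)) (S : Set (DBFD Rel Attr)) : ℚ :=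
  ((repQ D S Q).card : ℚ) / ((rep D S).card : ℚ)

/-- `Q` is self-join-free: no relation name occurs in two distinct atoms. -/
def sjf (Q : Finset (DBAtom Rel Attr Var Const)) : Prop :=
  ∀ α ∈ Q, ∀ β ∈ Q, α.rel = β.rel → α = β

/-- A canonical set of FDs with an LHS chain, given by the chain
`R : X₁ → Y₁, …, R : Xₙ → Yₙ` for each relation name `R`, with
`X₁ ⊊ X₂ ⊊ ⋯ ⊊ Xₙ`, each `Y_i` nonempty, `X_i ∩ Y_j = ∅` for all `i,j`,
and `Y_i ∩ Y_j = ∅` for `i ≠ j`. -/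
def canonicalChain (chain : Rel → List (Set Attr × Set Attr)) : Prop :=
  ∀ R : Rel,
    ((chain R).Pairwise fun a b => a.1 ⊂ b.1) ∧
    (∀ xy ∈ chain R, (xy.2 : Set Attr).Nonempty) ∧
    (∀ xy ∈ chain R, ∀ xy' ∈ chain R, xy.1 ∩ xy'.2 = ∅) ∧
    ((chain R).Pairwise fun a b => a.2 ∩ b.2 = ∅)

/-- The set of FDs induced by a chain. -/
def chainFDs (chain : Rel → List (Set Attr × Set Attr)) : Set (DBFD Rel Attr) :=
  {φ | ∃ xy ∈ chain φ.rel, φ.lhs = xy.1 ∧ φ.rhs = xy.2}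

/-- The `i`-th FD of the chain `L` has some attribute carrying a variable in atom `α`. -/
def chainVarAt (L : List (Set Attr × Set Attr)) (α : DBAtom Rel Attr Var Const) (i : ℕ) :
    Prop :=
  ∃ xy, L[i]? = some xy ∧ ∃ A ∈ xy.1 ∪ xy.2, ∃ v, α.val A = DBTerm.var v

/-- The index of the primary FD of the chain `L` w.r.t. the atom `α` (if it exists):
the first FD some of whose attributes carries a variable in `α`. -/
noncomputable def primaryIdx (L : List (Set Attr × Set Attr))
    (α : DBAtom Rel Attr Var Const) : Option ℕ :=
  if h : ∃ i, chainVarAt L α i then some (Nat.find h) else none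

/-- The primary FD of the chain `L` w.r.t. the atom `α` (if it exists). -/
noncomputable def primaryFD (L : List (Set Attr × Set Attr))
    (α : DBAtom Rel Attr Var Const) : Option (Set Attr × Set Attr) :=
  (primaryIdx L α).bind fun i => L[i]?

/-- The primary prefix of the chain `L` w.r.t. the atom `α`: the FDs strictly before the
primary FD, or the whole chain if there is no primary FD. -/
noncomputable def primaryPrefix (L : List (Set Attr × Set Attr))
    (α : DBAtom Rel Attr Var Const) : List (Set Attr × Set Attr) :=
  L.take ((primaryIdx L α).getD L.length)

/-- The primary-lhs positions (attributes) of the atom `α` w.r.t. the chain `L`. -/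
noncomputable def primaryLhs (L : List (Set Attr × Set Attr))
    (α : DBAtom Rel Attr Var Const) : Set Attr :=
  match primaryFD L α with
  | some xy => xy.1
  | none => Set.univ

/-- The variables of `α` occurring at primary-lhs positions. -/
noncomputable def pvar (L : List (Set Attr × Set Attr))
    (α : DBAtom Rel Attr Var Const) : Set Var :=
  {v | ∃ A ∈ primaryLhs L α, α.val A = DBTerm.var v}

/-- A liaison variable of `Q`: a variable with more than one occurrence in `Q`. -/
def liaison (Q : Finset (DBAtom Rel Attr Var Const)) (v : Var) : Prop :=
  ∃ α ∈ Q, ∃ β ∈ Q, ∃ A B, α.val A = DBTerm.var v ∧ β.val B = DBTerm.var v ∧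
    (α ≠ β ∨ A ≠ B)

/-- The complex part `comp(Q,Σ)` of `Q` w.r.t. the chain. -/
noncomputable def compPart (chain : Rel → List (Set Attr × Set Attr))
    (Q : Finset (DBAtom Rel Attr Var Const)) : Finset (DBAtom Rel Attr Var Const) :=
  Q.filter fun α => ∃ A, A ∉ primaryLhs (chain α.rel) α ∧
    ((∃ c, α.val A = DBTerm.const c) ∨ ∃ v, α.val A = DBTerm.var v ∧ liaison Q v) ∧
    ∀ xy ∈ primaryPrefix (chain α.rel) α, A ∉ xy.1 ∪ xy.2

/-- The fact `f` agrees with the atom `α` at attribute `A`, i.e. `α[A]` is the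
constant `f[A]`. -/
def agreesAt (f : DBFact Rel Attr Const) (α : DBAtom Rel Attr Var Const) (A : Attr) : Prop :=
  α.val A = DBTerm.const (f.val A)

/-- `D_conf^{Σ,Q}`: the facts of `D` conflicting with `Q` via an FD of the primary prefix. -/
noncomputable def dconf (chain : Rel → List (Set Attr × Set Attr))
    (Q : Finset (DBAtom Rel Attr Var Const)) (D : Finset (DBFact Rel Attr Const)) :
    Finset (DBFact Rel Attr Const) :=
  D.filter fun f => ∃ α ∈ Q, α.rel = f.rel ∧
    ∃ xy ∈ primaryPrefix (chain α.rel) α,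
      (∀ A ∈ xy.1, agreesAt f α A) ∧ ∃ B ∈ xy.2, ¬ agreesAt f α B

/-- `D_ind^{Σ,Q}`: the facts of `D \ D_conf^{Σ,Q}` disagreeing with `Q` on the lhs of an
FD of the primary prefix. -/
noncomputable def dind (chain : Rel → List (Set Attr × Set Attr))
    (Q : Finset (DBAtom Rel Attr Var Const)) (D : Finset (DBFact Rel Attr Const)) :
    Finset (DBFact Rel Attr Const) :=
  (D \ dconf chain Q D).filter fun f => ∃ α ∈ Q, α.rel = f.rel ∧
    ∃ xy ∈ primaryPrefix (chain α.rel) α, ∃ A ∈ xy.1, ¬ agreesAt f α A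

/-- The active domain of `D`: the constants occurring in `D`. -/
noncomputable def adom [Fintype Attr] (D : Finset (DBFact Rel Attr Const)) : Finset Const :=
  D.biUnion fun f => Finset.univ.image f.val

/-- Substituting a constant for a variable in a term. -/
noncomputable def substTerm (x : Var) (c : Const) : DBTerm Var Const → DBTerm Var Const
  | DBTerm.var v => if v = x then DBTerm.const c else DBTerm.var v
  | DBTerm.const d => DBTerm.const d

/-- Substituting a constant for a variable in an atom. -/
noncomputable def substAtom (x : Var) (c : Const) (α : DBAtom Rel Attr Var Const) :
    DBAtom Rel Attr Var Const :=
  ⟨α.rel, fun A => substTerm x c (α.val A)⟩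

/-- `Q_{x↦c}`: the query obtained from `Q` by replacing the variable `x` with `c`. -/
noncomputable def substQ (x : Var) (c : Const) (Q : Finset (DBAtom Rel Attr Var Const)) :
    Finset (DBAtom Rel Attr Var Const) :=
  Q.image (substAtom x c)

/-- The variables occurring in `Q`. -/
def qvars (Q : Finset (DBAtom Rel Attr Var Const)) : Set Var :=
  {v | ∃ α ∈ Q, ∃ A, α.val A = DBTerm.var v}

/-- `S` has an LHS chain: the left-hand sides of FDs over the same relation are
⊆-comparable. -/
def hasLHSChain (S : Set (DBFD Rel Attr)) : Prop :=
  ∀ φ ∈ S, ∀ ψ ∈ S, φ.rel = ψ.rel → φ.lhs ⊆ ψ.lhs ∨ ψ.lhs ⊆ φ.lhs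


lemma satFDs_mono {Rel Attr Const : Type*} {S : Set (DBFD Rel Attr)}
    {E F : Finset (DBFact Rel Attr Const)}
    (h : E ⊆ F) (hF : satFDs F S) : satFDs E S := by
  intro φ hφ f hf g hg
  exact hF φ hφ f (h hf) g (h hg)

lemma satFDs_of_pairs {Rel Attr Const : Type*} {S : Set (DBFD Rel Attr)}
    {E : Finset (DBFact Rel Attr Const)}
    (h : ∀ f ∈ E, ∀ g ∈ E, satFDs ({f, g} : Finset _) S) : satFDs E S := by
  intro φ hφ f hf g hg
  exact h f hf g hg φ hφ f (by simp) g (by simp)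

/-- If `{P 0, …, P (n-1)}` is a partition of `D` such that any two facts from distinct
parts jointly satisfy `S`, then `E` is a repair of `D` w.r.t. `S` iff `E` is the union
of repairs of the parts. -/
theorem stmt_0 {Rel Attr Const : Type*} (S : Set (DBFD Rel Attr))
    (D : Finset (DBFact Rel Attr Const)) (n : ℕ)
    (P : Fin n → Finset (DBFact Rel Attr Const))
    (hcover : D = Finset.univ.biUnion P)
    (hne : ∀ i, (P i).Nonempty)
    (hdisj : ∀ i j, i ≠ j → Disjoint (P i) (P j))
    (hind : ∀ i j, i ≠ j → ∀ f ∈ P i, ∀ g ∈ P j, satFDs {f, g} S) :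
    ∀ E : Finset (DBFact Rel Attr Const),
      isRepair S D E ↔
        ∃ P' : Fin n → Finset (DBFact Rel Attr Const),
          (∀ i, isRepair S (P i) (P' i)) ∧ E = Finset.univ.biUnion P' := by
  intro E
  constructor
  · rintro ⟨hED, hEsat, hEmax⟩
    refine ⟨fun i => E ∩ P i, fun i => ?_, ?_⟩
    · refine ⟨Finset.inter_subset_right, satFDs_mono Finset.inter_subset_left hEsat, ?_⟩
      intro F hEF hFP hFsat
      -- consider E' = (E \ P i) ∪ F
      have hE' : ((E \ P i) ∪ F) = E := by
        apply hEmax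
        · intro x hx
          rcases Finset.mem_inter.1 (Finset.mem_inter.2 ⟨hx, hx⟩) with ⟨hx', _⟩
          by_cases hxi : x ∈ P i
          · exact Finset.mem_union_right _ (hEF (Finset.mem_inter.2 ⟨hx, hxi⟩))
          · exact Finset.mem_union_left _ (Finset.mem_sdiff.2 ⟨hx, hxi⟩)
        · intro x hx
          rcases Finset.mem_union.1 hx with hx | hx
          · exact hED (Finset.mem_sdiff.1 hx).1
          · rw [hcover]
            exact Finset.mem_biUnion.2 ⟨i, Finset.mem_univ i, hFP hx⟩
        · apply satFDs_of_pairs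
          intro f hf g hg
          have part : ∀ x ∈ ((E \ P i) ∪ F), ∃ j, x ∈ P j ∧ (x ∈ P i → x ∈ F) := by
            intro x hx
            rcases Finset.mem_union.1 hx with hx | hx
            · rcases Finset.mem_sdiff.1 hx with ⟨hxE, hxi⟩
              rw [hcover] at hED
              rcases Finset.mem_biUnion.1 (hED hxE) with ⟨j, _, hj⟩
              exact ⟨j, hj, fun h => absurd h hxi⟩
            · exact ⟨i, hFP hx, fun _ => hx⟩
          rcases part f hf with ⟨jf, hjf, hfF⟩
          rcases part g hg with ⟨jg, hjg, hgF⟩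
          by_cases hj : jf = jg
          · subst hj
            by_cases hji : jf = i
            · subst hji
              apply satFDs_mono _ hFsat
              intro x hx
              rcases Finset.mem_insert.1 hx with rfl | hx
              · exact hfF hjf
              · rw [Finset.mem_singleton.1 hx]; exact hgF hjg
            · apply satFDs_mono _ hEsat
              intro x hx
              have hmem : ∀ y ∈ ((E \ P i) ∪ F) , y ∈ P jf → y ∈ E := by
                intro y hy hyj
                rcases Finset.mem_union.1 hy with hy | hy
                · exact (Finset.mem_sdiff.1 hy).1
                · exact absurd hyj (Finset.disjoint_left.1 (hdisj i jf (Ne.symm hji)) (hFP hy))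
              rcases Finset.mem_insert.1 hx with rfl | hx
              · exact hmem x hf hjf
              · rw [Finset.mem_singleton.1 hx]; exact hmem g hg hjg
          · exact hind jf jg hj f hjf g hjg
      -- conclude F = E ∩ P i
      apply Finset.Subset.antisymm _ hEF
      intro x hx
      have hxE : x ∈ E := hE' ▸ Finset.mem_union_right _ hx
      exact Finset.mem_inter.2 ⟨hxE, hFP hx⟩
    · ext x
      simp only [Finset.mem_biUnion, Finset.mem_univ, true_and, Finset.mem_inter]
      constructor
      · intro hx
        rw [hcover] at hED
        rcases Finset.mem_biUnion.1 (hED hx) with ⟨j, _, hj⟩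
        exact ⟨j, hx, hj⟩
      · rintro ⟨j, hx, _⟩; exact hx
  · rintro ⟨P', hP', rfl⟩
    have hsub : ∀ i, P' i ⊆ P i := fun i => (hP' i).1
    refine ⟨?_, ?_, ?_⟩
    · intro x hx
      rcases Finset.mem_biUnion.1 hx with ⟨j, _, hj⟩
      rw [hcover]
      exact Finset.mem_biUnion.2 ⟨j, Finset.mem_univ j, hsub j hj⟩
    · apply satFDs_of_pairs
      intro f hf g hg
      rcases Finset.mem_biUnion.1 hf with ⟨jf, _, hjf⟩
      rcases Finset.mem_biUnion.1 hg with ⟨jg, _, hjg⟩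
      by_cases hj : jf = jg
      · subst hj
        apply satFDs_mono _ (hP' jf).2.1
        intro x hx
        rcases Finset.mem_insert.1 hx with rfl | hx
        · exact hjf
        · rw [Finset.mem_singleton.1 hx]; exact hjg
      · exact hind jf jg hj f (hsub jf hjf) g (hsub jg hjg)
    · intro F hEF hFD hFsat
      have key : ∀ i, F ∩ P i = P' i := by
        intro i
        apply (hP' i).2.2
        · intro x hx
          exact Finset.mem_inter.2 ⟨hEF (Finset.mem_biUnion.2 ⟨i, Finset.mem_univ i, hx⟩),
            hsub i hx⟩
        · exact Finset.inter_subset_right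
        · exact satFDs_mono Finset.inter_subset_left hFsat
      ext x
      simp only [Finset.mem_biUnion, Finset.mem_univ, true_and]
      constructor
      · intro hx
        have := hFD hx
        rw [hcover] at this
        rcases Finset.mem_biUnion.1 this with ⟨j, _, hj⟩
        exact ⟨j, (key j) ▸ Finset.mem_inter.2 ⟨hx, hj⟩⟩
      · rintro ⟨j, hj⟩
        have := (key j) ▸ hj
        exact (Finset.mem_inter.1 this).1
end

section
/- Let D be a database, Σ a set of FDs, and {D₁,…,Dₙ} a partition of D such that for all distinct i,j ∈ [n] and all facts f ∈ D_i and g ∈ D_j, the two-fact database {f,g} satisfies Σ. Then |rep(D,Σ)| = ∏_{i ∈ [n]} |rep(D_i,Σ)|. -/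
open scoped Classical

variable {Rel Attr Var Const : Type*}

/-- If `{P 0, …, P (n-1)}` is a partition of `D` such that any two facts from distinct
parts jointly satisfy `S`, then `|rep(D,S)| = ∏ i, |rep(P i, S)|`. -/
theorem stmt_2 {Rel Attr Const : Type*} (S : Set (DBFD Rel Attr))
    (D : Finset (DBFact Rel Attr Const)) (n : ℕ)
    (P : Fin n → Finset (DBFact Rel Attr Const))
    (hcover : D = Finset.univ.biUnion P)
    (hne : ∀ i, (P i).Nonempty)
    (hdisj : ∀ i j, i ≠ j → Disjoint (P i) (P j))
    (hind : ∀ i j, i ≠ j → ∀ f ∈ P i, ∀ g ∈ P j, satFDs {f, g} S) :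
    (rep D S).card = ∏ i : Fin n, (rep (P i) S).card := by
  classical
  have hmono : ∀ (E F : Finset (DBFact Rel Attr Const)), E ⊆ F → satFDs F S → satFDs E S := by
    intro E F hEF hF φ hφ f hf g hg
    exact hF φ hφ f (hEF hf) g (hEF hg)
  have hpart : ∀ f ∈ D, ∃ i, f ∈ P i := by
    intro f hf; rw [hcover] at hf
    simpa using Finset.mem_biUnion.mp hf
  have hsat : ∀ (E : Finset (DBFact Rel Attr Const)), E ⊆ D →
      (∀ i, satFDs (E ∩ P i) S) → satFDs E S := by
    intro E hED h φ hφ f hf g hg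
    obtain ⟨i, hi⟩ := hpart f (hED hf)
    obtain ⟨j, hj⟩ := hpart g (hED hg)
    by_cases hij : i = j
    · subst hij
      exact h i φ hφ f (Finset.mem_inter.mpr ⟨hf, hi⟩) g (Finset.mem_inter.mpr ⟨hg, hj⟩)
    · exact hind i j hij f hi g hj φ hφ f (by simp) g (by simp)
  -- intersecting a union of part-subsets with P i recovers the i-th piece
  have hrec : ∀ (E : Fin n → Finset (DBFact Rel Attr Const)), (∀ i, E i ⊆ P i) →
      ∀ i, (Finset.univ.biUnion E) ∩ P i = E i := by
    intro E hE i
    ext f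
    simp only [Finset.mem_inter, Finset.mem_biUnion, Finset.mem_univ, true_and]
    constructor
    · rintro ⟨⟨j, hj⟩, hfi⟩
      rcases eq_or_ne j i with rfl | hne
      · exact hj
      · exact absurd (Finset.disjoint_left.mp (hdisj j i hne) (hE j hj) hfi) (fun h => h)
    · intro hf
      exact ⟨⟨i, hf⟩, hE i hf⟩
  have hrepD : ∀ E, E ∈ rep D S ↔ isRepair S D E ∧ E ⊆ D := by
    intro E
    simp [rep, Finset.mem_filter, Finset.mem_powerset, and_comm]
  have hrepP : ∀ i E, E ∈ rep (P i) S ↔ isRepair S (P i) E := by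
    intro i E
    simp only [rep, Finset.mem_filter, Finset.mem_powerset, and_iff_right_iff_imp]
    exact fun h => h.1
  -- forward: components of a repair are repairs
  have hfwd : ∀ E ∈ rep D S, ∀ i, (E ∩ P i) ∈ rep (P i) S := by
    intro E hE i
    rw [hrepD] at hE
    obtain ⟨⟨hED, hEsat, hEmax⟩, _⟩ := hE
    rw [hrepP]
    refine ⟨Finset.inter_subset_right, hmono _ _ Finset.inter_subset_left hEsat, ?_⟩
    intro F hFsub hFP hFsat
    set E' : Finset (DBFact Rel Attr Const) := (E \ P i) ∪ F with hE'
    have hE'P : ∀ j, E' ∩ P j = if j = i then F else E ∩ P j := by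
      intro j
      rcases eq_or_ne j i with rfl | hne
      · simp only [if_pos rfl]
        ext f
        simp only [hE', Finset.mem_inter, Finset.mem_union, Finset.mem_sdiff]
        constructor
        · rintro ⟨hf1 | hf2, hfj⟩
          · exact absurd hfj hf1.2
          · exact hf2
        · intro hf
          exact ⟨Or.inr hf, hFP hf⟩
      · simp only [if_neg hne]
        ext f
        simp only [hE', Finset.mem_inter, Finset.mem_union, Finset.mem_sdiff]
        constructor
        · rintro ⟨hf1 | hf2, hfj⟩
          · exact ⟨hf1.1, hfj⟩
          · exact absurd hfj (Finset.disjoint_left.mp (hdisj i j (Ne.symm hne)) (hFP hf2))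
        · rintro ⟨hf, hfj⟩
          refine ⟨Or.inl ⟨hf, ?_⟩, hfj⟩
          exact fun hfi => Finset.disjoint_left.mp (hdisj i j (Ne.symm hne)) hfi hfj
    have hE'D : E' ⊆ D := by
      intro f hf
      rcases Finset.mem_union.mp hf with h | h
      · exact hED (Finset.mem_sdiff.mp h).1
      · rw [hcover]
        exact Finset.mem_biUnion.mpr ⟨i, Finset.mem_univ i, hFP h⟩
    have hE'sat : satFDs E' S := by
      apply hsat E' hE'D
      intro j
      rw [hE'P j]
      split
      · exact hFsat
      · exact hmono _ _ Finset.inter_subset_left hEsat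
    have hEE' : E ⊆ E' := by
      intro f hf
      by_cases hfi : f ∈ P i
      · exact Finset.mem_union.mpr (Or.inr (hFsub (Finset.mem_inter.mpr ⟨hf, hfi⟩)))
      · exact Finset.mem_union.mpr (Or.inl (Finset.mem_sdiff.mpr ⟨hf, hfi⟩))
    have : E' = E := hEmax E' hEE' hE'D hE'sat
    calc F = E' ∩ P i := by rw [hE'P i]; simp
    _ = E ∩ P i := by rw [this]
  -- backward: union of component repairs is a repair
  have hbwd : ∀ (E : Fin n → Finset (DBFact Rel Attr Const)),
      (∀ i, E i ∈ rep (P i) S) → (Finset.univ.biUnion E) ∈ rep D S := by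
    intro E hE
    have hEP : ∀ i, E i ⊆ P i := fun i => ((hrepP i (E i)).mp (hE i)).1
    set G : Finset (DBFact Rel Attr Const) := Finset.univ.biUnion E with hG
    have hGD : G ⊆ D := by
      intro f hf
      obtain ⟨i, _, hfi⟩ := Finset.mem_biUnion.mp hf
      rw [hcover]
      exact Finset.mem_biUnion.mpr ⟨i, Finset.mem_univ i, hEP i hfi⟩
    have hGP : ∀ i, G ∩ P i = E i := hrec E hEP
    rw [hrepD]
    refine ⟨⟨hGD, ?_, ?_⟩, hGD⟩
    · apply hsat G hGD
      intro i
      rw [hGP i]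
      exact ((hrepP i (E i)).mp (hE i)).2.1
    · intro F hGF hFD hFsat
      have hFi : ∀ i, F ∩ P i = E i := by
        intro i
        obtain ⟨hEPi, hEsati, hEmaxi⟩ := (hrepP i (E i)).mp (hE i)
        apply hEmaxi
        · rw [← hGP i]
          exact Finset.inter_subset_inter hGF (le_refl _)
        · exact Finset.inter_subset_right
        · exact hmono _ _ Finset.inter_subset_left hFsat
      ext f
      simp only [hG, Finset.mem_biUnion, Finset.mem_univ, true_and]
      constructor
      · intro hf
        obtain ⟨i, hfi⟩ := hpart f (hFD hf)
        exact ⟨i, (hFi i) ▸ Finset.mem_inter.mpr ⟨hf, hfi⟩⟩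
      · rintro ⟨i, hfi⟩
        rw [← hFi i] at hfi
        exact (Finset.mem_inter.mp hfi).1
  -- bijection and counting
  rw [← Fintype.card_piFinset]
  apply Finset.card_bij' (fun E _ => fun k => E ∩ P k)
    (fun F _ => Finset.univ.biUnion F)
  · intro E hE
    exact Fintype.mem_piFinset.mpr (fun i => hfwd E hE i)
  · intro F hF
    exact hbwd F (Fintype.mem_piFinset.mp hF)
  · intro E hE
    have hED : E ⊆ D := ((hrepD E).mp hE).2
    ext f
    simp only [Finset.mem_biUnion, Finset.mem_univ, true_and, Finset.mem_inter]
    constructor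
    · rintro ⟨i, hf, _⟩
      exact hf
    · intro hf
      obtain ⟨i, hfi⟩ := hpart f (hED hf)
      exact ⟨i, hf, hfi⟩
  · intro F hF
    funext k
    exact hrec F (fun i => ((hrepP i (F i)).mp (Fintype.mem_piFinset.mp hF i)).1) k
end

section
/- Consider a database D, a canonical set Σ of FDs with an LHS chain, and an SJFCQ Q. Then |rep(D, Σ, Q)| = |rep(D \ D_conf^{Σ,Q}, Σ, Q)|. -/
open scoped Classical

variable {Rel Attr Var Const : Type*}

/-- Every FD in the primary prefix belongs to the chain, and all its attributes carry
constants in the atom. -/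
lemma primaryPrefix_mem_const {L : List (Set Attr × Set Attr)}
    {α : DBAtom Rel Attr Var Const} {xy : Set Attr × Set Attr}
    (hxy : xy ∈ primaryPrefix L α) :
    xy ∈ L ∧ ∀ A ∈ xy.1 ∪ xy.2, ∃ c, α.val A = DBTerm.const c := by
  unfold primaryPrefix at hxy
  obtain ⟨j, hj, hget⟩ := List.mem_iff_getElem.mp hxy
  have hjn : j < (primaryIdx L α).getD L.length :=
    lt_of_lt_of_le hj (by simp [List.length_take])
  have hjlen : j < L.length :=
    lt_of_lt_of_le hj (by simp [List.length_take])
  have hL : L[j] = xy := by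
    rw [← hget, List.getElem_take]
  have hnv : ¬ chainVarAt L α j := by
    by_cases hex : ∃ i, chainVarAt L α i
    · have hidx : primaryIdx L α = some (Nat.find hex) := dif_pos hex
      rw [hidx] at hjn
      exact Nat.find_min hex hjn
    · exact fun h => hex ⟨j, h⟩
  refine ⟨hL ▸ List.getElem_mem hjlen, ?_⟩
  intro A hA
  cases hval : α.val A with
  | const c => exact ⟨c, rfl⟩
  | var v =>
    exact absurd ⟨xy, by rw [List.getElem?_eq_getElem hjlen, hL], A, hA, v, hval⟩ hnv

/-- A consistent database containing the image of a homomorphism of `Q` cannot contain a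
conflicting fact. -/
lemma not_mem_dconf_of_sat {chain : Rel → List (Set Attr × Set Attr)}
    {Q : Finset (DBAtom Rel Attr Var Const)} {D F : Finset (DBFact Rel Attr Const)}
    (hsat : satFDs F (chainFDs chain)) (h : Var → Const)
    (hh : ∀ α ∈ Q, applyHom h α ∈ F) {f : DBFact Rel Attr Const} (hf : f ∈ F) :
    f ∉ dconf chain Q D := by
  intro hconf
  rw [dconf, Finset.mem_filter] at hconf
  obtain ⟨-, α, hαQ, hrel, xy, hxy, hagree, B, hB, hdis⟩ := hconf
  obtain ⟨hmem, hconst⟩ := primaryPrefix_mem_const hxy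
  have hg := hh α hαQ
  have hsatφ := hsat ⟨α.rel, xy.1, xy.2⟩ ⟨xy, hmem, rfl, rfl⟩
  have heq : f.val B = (applyHom h α).val B := by
    refine hsatφ f hf (applyHom h α) hg hrel.symm rfl ?_ B hB
    intro A hA
    have := hagree A hA
    rw [agreesAt] at this
    simp [applyHom, this]
  obtain ⟨c, hc⟩ := hconst B (Set.mem_union_right _ hB)
  apply hdis
  rw [agreesAt, hc]
  have : (applyHom h α).val B = c := by simp [applyHom, hc]
  rw [heq, this]

lemma repQ_eq_repQ_sdiff {chain : Rel → List (Set Attr × Set Attr)}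
    {Q : Finset (DBAtom Rel Attr Var Const)} (D : Finset (DBFact Rel Attr Const)) :
    repQ D (chainFDs chain) Q = repQ (D \ dconf chain Q D) (chainFDs chain) Q := by
  ext E
  simp only [repQ, rep, Finset.mem_filter, Finset.mem_powerset]
  constructor
  · rintro ⟨⟨hED, hED', hsatE, hmax⟩, hQ⟩
    obtain ⟨h, hh⟩ := hQ
    have hE' : E ⊆ D \ dconf chain Q D := by
      intro f hf
      rw [Finset.mem_sdiff]
      exact ⟨hED hf, not_mem_dconf_of_sat hsatE h hh hf⟩
    exact ⟨⟨hE', hE', hsatE, fun F hEF hFD' hFsat =>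
      hmax F hEF (hFD'.trans (Finset.sdiff_subset)) hFsat⟩, h, hh⟩
  · rintro ⟨⟨hED', -, hsatE, hmax'⟩, hQ⟩
    obtain ⟨h, hh⟩ := hQ
    have hED : E ⊆ D := hED'.trans Finset.sdiff_subset
    refine ⟨⟨hED, hED, hsatE, ?_⟩, h, hh⟩
    intro F hEF hFD hFsat
    have hFD' : F ⊆ D \ dconf chain Q D := by
      intro f hf
      rw [Finset.mem_sdiff]
      exact ⟨hFD hf, not_mem_dconf_of_sat hFsat h (fun α hα => hEF (hh α hα)) hf⟩
    exact hmax' F hEF hFD' hFsat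

/-- For a canonical set of FDs with an LHS chain and an SJFCQ `Q`,
`|rep(D,Σ,Q)| = |rep(D \ D_conf^{Σ,Q}, Σ, Q)|`. -/
theorem stmt_4 {Rel Attr Var Const : Type*}
    (chain : Rel → List (Set Attr × Set Attr)) (hchain : canonicalChain chain)
    (Q : Finset (DBAtom Rel Attr Var Const)) (hQne : Q.Nonempty) (hsjf : sjf Q)
    (D : Finset (DBFact Rel Attr Const)) :
    (repQ D (chainFDs chain) Q).card =
      (repQ (D \ dconf chain Q D) (chainFDs chain) Q).card := by
  rw [repQ_eq_repQ_sdiff]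
end

section
/- Consider a database D, a canonical set Σ of FDs with an LHS chain, and an SJFCQ Q. Then rfreq(Q, D \ D_conf^{Σ,Q}, Σ) = rfreq(Q, D \ (D_conf^{Σ,Q} ∪ D_ind^{Σ,Q}), Σ). -/
open scoped Classical

variable {Rel Attr Var Const : Type*}

/-! Removing `D_ind` does not change the relative frequency: no FD relates a fact of `D_ind`
to a fact of `D \ (D_conf ∪ D_ind)`, so every repair of `D \ D_conf` splits uniquely into a
repair of each part, and only the first part can host a homomorphic image of `Q`, because a
fact of `D_ind` disagrees with the constants its (unique, by self-join-freeness) atom carries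
on a primary-prefix lhs. Hence both counts of repairs get multiplied by `|rep(D_ind, Σ)|`. -/

section FinsetSplit

variable {α : Type*} [DecidableEq α] {s t u v : Finset α}

theorem Finset.union_inter_eq_left_of_disjoint (hd : Disjoint s t) (hu : u ⊆ s) (hv : v ⊆ t) :
    (u ∪ v) ∩ s = u := by
  rw [Finset.union_inter_distrib_right, Finset.inter_eq_left.mpr hu,
    Finset.disjoint_iff_inter_eq_empty.mp (hd.symm.mono_left hv), Finset.union_empty]

theorem Finset.union_inter_eq_right_of_disjoint (hd : Disjoint s t) (hu : u ⊆ s) (hv : v ⊆ t) :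
    (u ∪ v) ∩ t = v := by
  rw [Finset.union_comm, Finset.union_inter_eq_left_of_disjoint hd.symm hv hu]

theorem Finset.inter_union_inter_eq_of_subset (h : u ⊆ s ∪ t) : u ∩ s ∪ u ∩ t = u := by
  rw [← Finset.inter_union_distrib_left, Finset.inter_eq_left.mpr h]

end FinsetSplit

section Repairs

variable {S : Set (DBFD Rel Attr)} {D E X Y : Finset (DBFact Rel Attr Const)}

theorem satFDs.mono (hED : E ⊆ D) (h : satFDs D S) : satFDs E S :=
  fun φ hφ f hf g hg => h φ hφ f (hED hf) g (hED hg)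

theorem entails.mono {Q : Finset (DBAtom Rel Attr Var Const)} (hED : E ⊆ D) (h : entails E Q) :
    entails D Q :=
  let ⟨h, hh⟩ := h; ⟨h, fun α hα => hED (hh α hα)⟩

theorem mem_rep : E ∈ rep D S ↔ isRepair S D E := by
  simp only [rep, Finset.mem_filter, Finset.mem_powerset, and_iff_right_iff_imp]
  exact fun h => h.1

theorem rep_nonempty (D : Finset (DBFact Rel Attr Const)) (S : Set (DBFD Rel Attr)) :
    (rep D S).Nonempty := by
  have hcons : (D.powerset.filter (satFDs · S)).Nonempty :=
    ⟨∅, Finset.mem_filter.mpr ⟨Finset.empty_mem_powerset _, by simp [satFDs, satFD]⟩⟩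
  obtain ⟨E, hE, hmax⟩ := Finset.exists_maximal hcons
  simp only [Finset.mem_filter, Finset.mem_powerset] at hE
  refine ⟨E, mem_rep.mpr ⟨hE.1, hE.2, fun F hEF hFD hF => ?_⟩⟩
  exact le_antisymm (hmax (Finset.mem_filter.mpr ⟨Finset.mem_powerset.mpr hFD, hF⟩) hEF) hEF

def NoCrossConflict (S : Set (DBFD Rel Attr)) (X Y : Finset (DBFact Rel Attr Const)) : Prop :=
  ∀ φ ∈ S, ∀ x ∈ X, ∀ y ∈ Y, x.rel = φ.rel → y.rel = φ.rel →
    (∀ A ∈ φ.lhs, x.val A = y.val A) → ∀ A ∈ φ.rhs, x.val A = y.val A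

theorem satFDs_union (hc : NoCrossConflict S X Y) {Ex Ey : Finset (DBFact Rel Attr Const)}
    (hEx : Ex ⊆ X) (hEy : Ey ⊆ Y) (hx : satFDs Ex S) (hy : satFDs Ey S) :
    satFDs (Ex ∪ Ey) S := by
  intro φ hφ f hf g hg hfr hgr hlhs A hA
  rcases Finset.mem_union.mp hf with hf | hf <;> rcases Finset.mem_union.mp hg with hg | hg
  · exact hx φ hφ f hf g hg hfr hgr hlhs A hA
  · exact hc φ hφ f (hEx hf) g (hEy hg) hfr hgr hlhs A hA
  · exact (hc φ hφ g (hEx hg) f (hEy hf) hgr hfr (fun B hB => (hlhs B hB).symm) A hA).symm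
  · exact hy φ hφ f hf g hg hfr hgr hlhs A hA

theorem isRepair_union_iff (hd : Disjoint X Y) (hc : NoCrossConflict S X Y) (hE : E ⊆ X ∪ Y) :
    isRepair S (X ∪ Y) E ↔ isRepair S X (E ∩ X) ∧ isRepair S Y (E ∩ Y) := by
  have hsplit := Finset.inter_union_inter_eq_of_subset hE
  constructor
  · rintro ⟨-, hsat, hmax⟩
    have hEX := hsat.mono (Finset.inter_subset_left (s₂ := X))
    have hEY := hsat.mono (Finset.inter_subset_left (s₂ := Y))
    refine ⟨⟨Finset.inter_subset_right, hEX, fun F hEF hFX hF => ?_⟩,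
      ⟨Finset.inter_subset_right, hEY, fun F hEF hFY hF => ?_⟩⟩
    · have hG := hmax (F ∪ E ∩ Y)
        (hsplit.superset.trans (Finset.union_subset_union hEF subset_rfl))
        (Finset.union_subset_union hFX Finset.inter_subset_right)
        (satFDs_union hc hFX Finset.inter_subset_right hF hEY)
      rw [← hG, Finset.union_inter_eq_left_of_disjoint hd hFX Finset.inter_subset_right]
    · have hG := hmax (E ∩ X ∪ F)
        (hsplit.superset.trans (Finset.union_subset_union subset_rfl hEF))
        (Finset.union_subset_union Finset.inter_subset_right hFY)
        (satFDs_union hc Finset.inter_subset_right hFY hEX hF)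
      rw [← hG, Finset.union_inter_eq_right_of_disjoint hd Finset.inter_subset_right hFY]
  · rintro ⟨⟨hXsub, hXsat, hXmax⟩, hYsub, hYsat, hYmax⟩
    refine ⟨hE, hsplit ▸ satFDs_union hc hXsub hYsub hXsat hYsat, fun F hEF hFXY hF => ?_⟩
    rw [← Finset.inter_union_inter_eq_of_subset hFXY, ← hsplit,
      hXmax _ (Finset.inter_subset_inter hEF le_rfl) Finset.inter_subset_right
        (hF.mono Finset.inter_subset_left),
      hYmax _ (Finset.inter_subset_inter hEF le_rfl) Finset.inter_subset_right
        (hF.mono Finset.inter_subset_left)]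

theorem card_filter_rep_union (hd : Disjoint X Y) (hc : NoCrossConflict S X Y)
    (p : Finset (DBFact Rel Attr Const) → Prop)
    (hp : ∀ E ⊆ X ∪ Y, p E ↔ p (E ∩ X)) :
    ((rep (X ∪ Y) S).filter p).card = ((rep X S).filter p).card * (rep Y S).card := by
  rw [← Finset.card_product]
  refine Finset.card_nbij' (fun E => (E ∩ X, E ∩ Y)) (fun P => P.1 ∪ P.2) ?_ ?_ ?_ ?_
  · intro E hE
    simp only [Finset.mem_coe, Finset.mem_filter, Finset.mem_product, mem_rep] at hE ⊢
    obtain ⟨hrep, hpE⟩ := hE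
    have hsplit := (isRepair_union_iff hd hc hrep.1).mp hrep
    exact ⟨⟨hsplit.1, (hp E hrep.1).mp hpE⟩, hsplit.2⟩
  · rintro ⟨Ex, Ey⟩ hP
    simp only [Finset.mem_coe, Finset.mem_filter, Finset.mem_product, mem_rep] at hP ⊢
    obtain ⟨⟨hx, hpx⟩, hy⟩ := hP
    have hsub : Ex ∪ Ey ⊆ X ∪ Y := Finset.union_subset_union hx.1 hy.1
    have hX := Finset.union_inter_eq_left_of_disjoint hd hx.1 hy.1
    have hY := Finset.union_inter_eq_right_of_disjoint hd hx.1 hy.1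
    exact ⟨(isRepair_union_iff hd hc hsub).mpr (by rw [hX, hY]; exact ⟨hx, hy⟩),
      (hp _ hsub).mpr (by rwa [hX])⟩
  · intro E hE
    exact Finset.inter_union_inter_eq_of_subset (mem_rep.mp (Finset.mem_filter.mp hE).1).1
  · rintro ⟨Ex, Ey⟩ hP
    simp only [Finset.mem_coe, Finset.mem_filter, Finset.mem_product, mem_rep] at hP
    exact Prod.ext (Finset.union_inter_eq_left_of_disjoint hd hP.1.1.1 hP.2.1)
      (Finset.union_inter_eq_right_of_disjoint hd hP.1.1.1 hP.2.1)

theorem entails_inter_iff {Q : Finset (DBAtom Rel Attr Var Const)} (hE : E ⊆ X ∪ Y)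
    (hY : ∀ (h : Var → Const), ∀ α ∈ Q, applyHom h α ∉ Y) :
    entails E Q ↔ entails (E ∩ X) Q := by
  refine ⟨fun ⟨h, hh⟩ => ⟨h, fun α hα => Finset.mem_inter.mpr ⟨hh α hα, ?_⟩⟩,
    entails.mono Finset.inter_subset_left⟩
  exact (Finset.mem_union.mp (hE (hh α hα))).resolve_right (hY h α hα)

theorem rfreq_union_eq (Q : Finset (DBAtom Rel Attr Var Const)) (hd : Disjoint X Y)
    (hc : NoCrossConflict S X Y) (hY : ∀ (h : Var → Const), ∀ α ∈ Q, applyHom h α ∉ Y) :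
    rfreq Q (X ∪ Y) S = rfreq Q X S := by
  have hQ := card_filter_rep_union hd hc (entails · Q) fun E hE => entails_inter_iff hE hY
  have hall := card_filter_rep_union hd hc (fun _ => True) fun _ _ => Iff.rfl
  have hYpos : ((rep Y S).card : ℚ) ≠ 0 := by
    exact_mod_cast (Finset.card_pos.mpr (rep_nonempty Y S)).ne'
  simp only [Finset.filter_true] at hall
  rw [rfreq, rfreq, repQ, repQ, hQ, hall, Nat.cast_mul, Nat.cast_mul,
    mul_div_mul_right _ _ hYpos]

end Repairs

theorem List.mem_take_or_rel_of_pairwise {α : Type*} {R : α → α → Prop} {l : List α}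
    (hl : l.Pairwise R) {k : ℕ} {a b : α} (ha : a ∈ l.take k) (hb : b ∈ l) :
    b ∈ l.take k ∨ R a b := by
  obtain ⟨j, hj, rfl⟩ := List.mem_take_iff_getElem.mp ha
  obtain ⟨m, hm, rfl⟩ := List.mem_iff_getElem.mp hb
  by_cases hmk : m < k
  · exact Or.inl (List.mem_take_iff_getElem.mpr ⟨m, lt_min hmk hm, rfl⟩)
  · exact Or.inr (List.pairwise_iff_getElem.mp hl j m _ hm (by omega))

section PrimaryPrefix

variable {L : List (Set Attr × Set Attr)} {α : DBAtom Rel Attr Var Const}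
  {xy : Set Attr × Set Attr} {A : Attr}

theorem val_ne_var_of_mem_primaryPrefix (hxy : xy ∈ primaryPrefix L α) (hA : A ∈ xy.1 ∪ xy.2)
    (v : Var) : α.val A ≠ DBTerm.var v := by
  intro hv
  obtain ⟨j, hj, rfl⟩ := List.mem_take_iff_getElem.mp hxy
  have hvar : chainVarAt L α j := ⟨_, List.getElem?_eq_getElem _, A, hA, v, hv⟩
  replace hj := (lt_min_iff.mp hj).1
  unfold primaryIdx at hj
  split at hj
  · next h => exact Nat.find_min h (by simpa using hj) hvar
  · next h => exact h ⟨j, hvar⟩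

theorem agreesAt_applyHom (h : Var → Const) (hA : ∀ v, α.val A ≠ DBTerm.var v) :
    agreesAt (applyHom h α) α A := by
  cases hc : α.val A with
  | var v => exact absurd hc (hA v)
  | const c => simp [agreesAt, applyHom, hc]

end PrimaryPrefix

theorem agreesAt.val_eq {f g : DBFact Rel Attr Const} {α : DBAtom Rel Attr Var Const} {A : Attr}
    (hf : agreesAt f α A) (hg : agreesAt g α A) : f.val A = g.val A :=
  DBTerm.const.inj (hf.symm.trans hg)

theorem agreesAt.of_val_eq {f g : DBFact Rel Attr Const} {α : DBAtom Rel Attr Var Const}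
    {A : Attr} (hf : agreesAt f α A) (h : f.val A = g.val A) : agreesAt g α A := by
  rwa [agreesAt, ← h]

section ConflictAndIndependent

variable {chain : Rel → List (Set Attr × Set Attr)} {Q : Finset (DBAtom Rel Attr Var Const)}
  {D : Finset (DBFact Rel Attr Const)} {f : DBFact Rel Attr Const}
  {α : DBAtom Rel Attr Var Const} {xy : Set Attr × Set Attr}

theorem applyHom_not_mem_dind (hsjf : sjf Q) (h : Var → Const) (hα : α ∈ Q) :
    applyHom h α ∉ dind chain Q D := by
  intro hf
  obtain ⟨β, hβ, hβα, xy, hxy, A, hA, hdis⟩ := (Finset.mem_filter.mp hf).2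
  obtain rfl := hsjf α hα β hβ hβα.symm
  exact hdis (agreesAt_applyHom h (val_ne_var_of_mem_primaryPrefix hxy (Or.inl hA)))

theorem agreesAt_of_not_mem_dind (hf : f ∈ D \ dconf chain Q D) (hfI : f ∉ dind chain Q D)
    (hα : α ∈ Q) (hrel : α.rel = f.rel) (hxy : xy ∈ primaryPrefix (chain α.rel) α) :
    ∀ A ∈ xy.1, agreesAt f α A := by
  intro A hA
  by_contra hdis
  exact hfI (Finset.mem_filter.mpr ⟨hf, α, hα, hrel, xy, hxy, A, hA, hdis⟩)

theorem agreesAt_rhs_of_not_mem_dconf (hfD : f ∈ D) (hfC : f ∉ dconf chain Q D)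
    (hα : α ∈ Q) (hrel : α.rel = f.rel) (hxy : xy ∈ primaryPrefix (chain α.rel) α)
    (hlhs : ∀ A ∈ xy.1, agreesAt f α A) : ∀ B ∈ xy.2, agreesAt f α B := by
  intro B hB
  by_contra hdis
  exact hfC (Finset.mem_filter.mpr ⟨hfD, α, hα, hrel, xy, hxy, hlhs, B, hB, hdis⟩)

theorem noCrossConflict_dind (hchain : ∀ R, (chain R).Pairwise fun a b => a.1 ⊂ b.1) :
    NoCrossConflict (chainFDs chain) ((D \ dconf chain Q D) \ dind chain Q D) (dind chain Q D) := by
  rintro φ ⟨xym, hxym, hl, hr⟩ x hx f hf hxr hfr hlhs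
  obtain ⟨⟨hxD, hxC⟩, hxI⟩ := by simpa only [Finset.mem_sdiff] using hx
  obtain ⟨hfDC, α, hα, hαf, xyj, hxyj, A₀, hA₀, hfA₀⟩ := Finset.mem_filter.mp hf
  have hαx : α.rel = x.rel := hαf.trans (hfr.trans hxr.symm)
  have hxα := fun xy (hxy : xy ∈ primaryPrefix (chain α.rel) α) =>
    agreesAt_of_not_mem_dind (Finset.mem_sdiff.mpr ⟨hxD, hxC⟩) hxI hα hαx hxy
  rw [← hfr, ← hαf] at hxym
  -- Either `φ` lies in the primary prefix, where `x` and `f` both copy the constants of `α`,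
  -- or its lhs contains the lhs of `xyj`, on which `x` and `f` differ at `A₀`.
  rcases List.mem_take_or_rel_of_pairwise (hchain _) hxyj hxym with hpre | hsub
  · have hfα : ∀ A ∈ xym.1, agreesAt f α A := fun A hA =>
      (hxα _ hpre A hA).of_val_eq (hlhs A (hl ▸ hA))
    obtain ⟨hfD, hfC⟩ := Finset.mem_sdiff.mp hfDC
    intro B hB
    rw [hr] at hB
    exact (agreesAt_rhs_of_not_mem_dconf hxD hxC hα hαx hpre (hxα _ hpre) B hB).val_eq
      (agreesAt_rhs_of_not_mem_dconf hfD hfC hα hαf hpre hfα B hB)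
  · exact absurd ((hxα _ hxyj A₀ hA₀).of_val_eq (hlhs A₀ (hl ▸ hsub.subset hA₀))) hfA₀

end ConflictAndIndependent

theorem stmt_5_general {Rel Attr Var Const : Type*}
    (chain : Rel → List (Set Attr × Set Attr)) (hchain : canonicalChain chain)
    (Q : Finset (DBAtom Rel Attr Var Const)) (hsjf : sjf Q)
    (D : Finset (DBFact Rel Attr Const)) :
    rfreq Q (D \ dconf chain Q D) (chainFDs chain) =
      rfreq Q (D \ (dconf chain Q D ∪ dind chain Q D)) (chainFDs chain) := by
  have hI : dind chain Q D ⊆ D \ dconf chain Q D := Finset.filter_subset _ _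
  calc rfreq Q (D \ dconf chain Q D) (chainFDs chain)
      = rfreq Q ((D \ dconf chain Q D) \ dind chain Q D ∪ dind chain Q D) (chainFDs chain) := by
        rw [Finset.sdiff_union_of_subset hI]
    _ = rfreq Q ((D \ dconf chain Q D) \ dind chain Q D) (chainFDs chain) :=
        rfreq_union_eq Q Finset.sdiff_disjoint (noCrossConflict_dind fun R => (hchain R).1)
          fun h _ hα => applyHom_not_mem_dind hsjf h hα
    _ = _ := by rw [sdiff_sdiff, Finset.sup_eq_union]

/-- For a canonical set of FDs with an LHS chain and an SJFCQ `Q`,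
`rfreq(Q, D \ D_conf, Σ) = rfreq(Q, D \ (D_conf ∪ D_ind), Σ)`. -/
theorem stmt_5 {Rel Attr Var Const : Type*}
    (chain : Rel → List (Set Attr × Set Attr)) (hchain : canonicalChain chain)
    (Q : Finset (DBAtom Rel Attr Var Const)) (hQne : Q.Nonempty) (hsjf : sjf Q)
    (D : Finset (DBFact Rel Attr Const)) :
    rfreq Q (D \ dconf chain Q D) (chainFDs chain) =
      rfreq Q (D \ (dconf chain Q D ∪ dind chain Q D)) (chainFDs chain) :=
  stmt_5_general chain hchain Q hsjf D
end

section
/- Consider a database D, a canonical set Σ of FDs with an LHS chain, and an SJFCQ Q, and let D^{Σ,Q} = D \ (D_conf^{Σ,Q} ∪ D_ind^{Σ,Q}). For every relation name R occurring in Q with atom α_R: if f and g are R-facts of D^{Σ,Q} with f[A] ≠ g[A] for some primary-lhs position (R,A) of α_R, then the database {f,g} satisfies Σ_R. -/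
open scoped Classical

variable {Rel Attr Var Const : Type*}

lemma agree_prefix_aux {Rel Attr Var Const : Type*}
    (chain : Rel → List (Set Attr × Set Attr))
    (Q : Finset (DBAtom Rel Attr Var Const))
    (D : Finset (DBFact Rel Attr Const))
    (α : DBAtom Rel Attr Var Const) (hα : α ∈ Q)
    (h : DBFact Rel Attr Const)
    (hh : h ∈ D \ (dconf chain Q D ∪ dind chain Q D))
    (hrel : h.rel = α.rel) :
    ∀ xy ∈ primaryPrefix (chain α.rel) α,
      (∀ B ∈ xy.1, agreesAt h α B) ∧ (∀ B ∈ xy.2, agreesAt h α B) := by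
  rw [Finset.mem_sdiff, Finset.mem_union] at hh
  obtain ⟨hD, hnc⟩ := hh
  push_neg at hnc
  obtain ⟨hnconf, hnind⟩ := hnc
  have hDc : h ∈ D \ dconf chain Q D := Finset.mem_sdiff.mpr ⟨hD, hnconf⟩
  intro xy hxy
  have hlhs : ∀ B ∈ xy.1, agreesAt h α B := by
    by_contra hc
    push_neg at hc
    obtain ⟨B, hB, hBne⟩ := hc
    exact hnind (Finset.mem_filter.mpr ⟨hDc, α, hα, hrel.symm, xy, hxy, B, hB, hBne⟩)
  refine ⟨hlhs, ?_⟩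
  intro B hB
  by_contra hBne
  exact hnconf (Finset.mem_filter.mpr ⟨hD, α, hα, hrel.symm, xy, hxy, hlhs, B, hB, hBne⟩)

/-- For a canonical set of FDs with an LHS chain and an SJFCQ `Q`: two `R`-facts of
`D^{Σ,Q} = D \ (D_conf ∪ D_ind)` that disagree on some primary-lhs position of the
`R`-atom of `Q` jointly satisfy `Σ_R`. -/
theorem stmt_7 {Rel Attr Var Const : Type*}
    (chain : Rel → List (Set Attr × Set Attr)) (hchain : canonicalChain chain)
    (Q : Finset (DBAtom Rel Attr Var Const)) (hQne : Q.Nonempty) (hsjf : sjf Q)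
    (D : Finset (DBFact Rel Attr Const))
    (α : DBAtom Rel Attr Var Const) (hα : α ∈ Q)
    (f g : DBFact Rel Attr Const)
    (hf : f ∈ D \ (dconf chain Q D ∪ dind chain Q D))
    (hg : g ∈ D \ (dconf chain Q D ∪ dind chain Q D))
    (hfrel : f.rel = α.rel) (hgrel : g.rel = α.rel)
    (A : Attr) (hA : A ∈ primaryLhs (chain α.rel) α) (hAne : f.val A ≠ g.val A) :
    satFDs {f, g} {φ ∈ chainFDs chain | φ.rel = α.rel} := by
  set L := chain α.rel with hL
  intro φ hφ
  obtain ⟨⟨xy, hxyL, hlhsφ, hrhsφ⟩, hφrel⟩ := hφ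
  rw [hφrel] at hxyL
  -- index of xy in L
  obtain ⟨j, hjlt, hjget⟩ := List.mem_iff_getElem.mp hxyL
  -- helper: if xy lies in the primary prefix, both f and g agree with α on xy.2
  have key : xy ∈ primaryPrefix L α → ∀ B ∈ φ.rhs, f.val B = g.val B := by
    intro hmem B hB
    rw [hrhsφ] at hB
    have hfagr := (agree_prefix_aux chain Q D α hα f hf hfrel xy hmem).2 B hB
    have hgagr := (agree_prefix_aux chain Q D α hα g hg hgrel xy hmem).2 B hB
    unfold agreesAt at hfagr hgagr
    have := hfagr.symm.trans hgagr
    exact DBTerm.const.inj this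
  -- helper: finish satFD given agreement on the rhs
  have finish : (∀ B ∈ φ.rhs, f.val B = g.val B) → satFD {f, g} φ := by
    intro hfg f' hf' g' hg' _ _ _ B hB
    have hval : ∀ x ∈ ({f, g} : Finset (DBFact Rel Attr Const)), x.val B = f.val B := by
      intro x hx
      rcases Finset.mem_insert.mp hx with h | h
      · rw [h]
      · rw [Finset.mem_singleton] at h; rw [h]; exact (hfg B hB).symm
    rw [hval f' hf', hval g' hg']
  -- helper: if A ∈ φ.lhs, the FD is vacuously satisfied by {f,g}
  have vac : A ∈ φ.lhs → satFD {f, g} φ := by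
    intro hAφ f' hf' g' hg' _ _ hprem B hB
    have h1 : f' = f ∨ f' = g := by
      rcases Finset.mem_insert.mp hf' with h | h
      · exact Or.inl h
      · exact Or.inr (Finset.mem_singleton.mp h)
    have h2 : g' = f ∨ g' = g := by
      rcases Finset.mem_insert.mp hg' with h | h
      · exact Or.inl h
      · exact Or.inr (Finset.mem_singleton.mp h)
    rcases h1 with h1 | h1 <;> rcases h2 with h2 | h2
    · rw [h1, h2]
    · have := hprem A hAφ; rw [h1, h2] at this; exact absurd this hAne
    · have := hprem A hAφ; rw [h1, h2] at this; exact absurd this.symm hAne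
    · rw [h1, h2]
  by_cases hex : ∃ i, chainVarAt L α i
  · have hidx : primaryIdx L α = some (Nat.find hex) := dif_pos hex
    set i := Nat.find hex with hi
    have hspec : chainVarAt L α i := Nat.find_spec hex
    obtain ⟨xyp, hxyp, _⟩ := hspec
    have hilt : i < L.length := by
      by_contra hge
      rw [List.getElem?_eq_none (Nat.le_of_not_lt hge)] at hxyp
      exact Option.some_ne_none _ hxyp.symm
    have hxyp' : L[i] = xyp := by
      have := List.getElem?_eq_getElem hilt
      rw [this] at hxyp
      exact (Option.some.inj hxyp)
    have hLhs : primaryLhs L α = xyp.1 := by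
      unfold primaryLhs primaryFD
      rw [hidx, Option.bind_some, hxyp]
    rw [hLhs] at hA
    rcases lt_or_ge j i with hji | hji
    · -- xy in the primary prefix
      apply finish
      apply key
      have hpp : primaryPrefix L α = L.take i := by
        unfold primaryPrefix; rw [hidx]; rfl
      rw [hpp]
      rw [List.mem_iff_getElem]
      refine ⟨j, ?_, ?_⟩
      · rw [List.length_take]; exact lt_min hji hjlt
      · rw [List.getElem_take]; exact hjget
    · -- j ≥ i : A ∈ xy.1
      apply vac
      rw [hlhsφ]
      rcases eq_or_lt_of_le hji with heq | hlt
      · have hxyeq : xy = xyp := by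
          rw [heq] at hxyp
          rw [List.getElem?_eq_getElem hjlt, hjget] at hxyp
          exact Option.some.inj hxyp
        rw [hxyeq]
        exact hA
      · have hpw := (hchain α.rel).1
        have := List.pairwise_iff_getElem.mp hpw i j hilt hjlt hlt
        rw [hxyp', hjget] at this
        exact this.1 hA
  · -- no primary FD: the whole chain is the prefix
    apply finish
    apply key
    unfold primaryPrefix primaryIdx
    rw [dif_neg hex]
    simpa using hxyL
end

section
/- Consider a database D, a canonical set Σ of FDs with an LHS chain, and an SJFCQ Q such that comp(Q,Σ) = ∅ and D ⊨ Q. Then |rep(D, Σ, Q)| = |rep(D \ D_conf^{Σ,Q}, Σ)|; equivalently, every repair of D \ D_conf^{Σ,Q} w.r.t. Σ entails Q, and the repairs of D w.r.t. Σ that entail Q are exactly the repairs of D \ D_conf^{Σ,Q} w.r.t. Σ. -/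
open scoped Classical

variable {Rel Attr Var Const : Type*}

section Aux

variable {chain : Rel → List (Set Attr × Set Attr)}
variable {Q : Finset (DBAtom Rel Attr Var Const)} {D : Finset (DBFact Rel Attr Const)}

lemma fact_ext {f g : DBFact Rel Attr Const} (h1 : f.rel = g.rel) (h2 : f.val = g.val) :
    f = g := by cases f; cases g; simp_all

lemma applyHom_rel (h : Var → Const) (α : DBAtom Rel Attr Var Const) :
    (applyHom h α).rel = α.rel := rfl

lemma applyHom_val_const {α : DBAtom Rel Attr Var Const} {A : Attr} {c : Const}
    (hc : α.val A = DBTerm.const c) (h : Var → Const) : (applyHom h α).val A = c := by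
  simp [applyHom, hc]

lemma applyHom_val_var {α : DBAtom Rel Attr Var Const} {A : Attr} {v : Var}
    (hv : α.val A = DBTerm.var v) (h : Var → Const) : (applyHom h α).val A = h v := by
  simp [applyHom, hv]

lemma primaryPrefix_def (L : List (Set Attr × Set Attr)) (α : DBAtom Rel Attr Var Const) :
    primaryPrefix L α = L.take ((primaryIdx L α).getD L.length) := rfl

lemma prefix_const {L : List (Set Attr × Set Attr)} {α : DBAtom Rel Attr Var Const}
    {xy : Set Attr × Set Attr} (hxy : xy ∈ primaryPrefix L α) {A : Attr}
    (hA : A ∈ xy.1 ∪ xy.2) : ∃ c, α.val A = DBTerm.const c := by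
  obtain ⟨j, hj, hget⟩ := List.mem_iff_getElem.mp hxy
  have hj' := hj
  rw [primaryPrefix_def, List.length_take] at hj'
  have hjn : j < (primaryIdx L α).getD L.length := lt_of_lt_of_le hj' (min_le_left _ _)
  have hjL : j < L.length := lt_of_lt_of_le hj' (min_le_right _ _)
  have hLj : L[j] = xy := by rw [← hget]; exact (List.getElem_take).symm
  have hnot : ¬ chainVarAt L α j := by
    intro hcv
    rw [primaryIdx] at hjn
    by_cases h : ∃ i, chainVarAt L α i
    · rw [dif_pos h] at hjn
      simp only [Option.getD_some] at hjn
      exact Nat.find_min h hjn hcv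
    · exact h ⟨j, hcv⟩
  cases hv : α.val A with
  | const c => exact ⟨c, rfl⟩
  | var v =>
    exact absurd ⟨xy, by rw [List.getElem?_eq_getElem hjL, hLj], A, hA, v, hv⟩ hnot

lemma prefix_mem {L : List (Set Attr × Set Attr)} {α : DBAtom Rel Attr Var Const}
    {xy : Set Attr × Set Attr} (hxy : xy ∈ primaryPrefix L α) : xy ∈ L :=
  List.take_subset _ _ hxy

/-- A fact conflicting with an atom via a primary-prefix FD cannot coexist with a
homomorphic image of that atom in a consistent database. -/
lemma conflict_false {α : DBAtom Rel Attr Var Const}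
    {xy : Set Attr × Set Attr} (hxy : xy ∈ primaryPrefix (chain α.rel) α)
    {f : DBFact Rel Attr Const} (hrel : f.rel = α.rel)
    (hlhs : ∀ A ∈ xy.1, agreesAt f α A) {B : Attr} (hB : B ∈ xy.2)
    (hneg : ¬ agreesAt f α B) {F : Finset (DBFact Rel Attr Const)} {h : Var → Const}
    (hf : f ∈ F) (hg : applyHom h α ∈ F) (hsat : satFDs F (chainFDs chain)) : False := by
  have hφ : (⟨α.rel, xy.1, xy.2⟩ : DBFD Rel Attr) ∈ chainFDs chain :=
    ⟨xy, prefix_mem hxy, rfl, rfl⟩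
  have hag : ∀ A ∈ xy.1, f.val A = (applyHom h α).val A := by
    intro A hA
    have h1 := hlhs A hA
    rw [agreesAt] at h1
    rw [applyHom_val_const h1 h]
  have key := hsat _ hφ f hf (applyHom h α) hg hrel rfl hag B hB
  obtain ⟨c, hc⟩ := prefix_const hxy (Set.mem_union_right _ hB)
  apply hneg
  rw [agreesAt, hc, key, applyHom_val_const hc h]

lemma hom_notin_dconf (hsjf : sjf Q) {α : DBAtom Rel Attr Var Const} (hα : α ∈ Q)
    (h : Var → Const) : applyHom h α ∉ dconf chain Q D := by
  intro hmem
  rw [dconf, Finset.mem_filter] at hmem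
  obtain ⟨-, β, hβ, hβrel, xy, hxy, -, B, hB, hnag⟩ := hmem
  have hβα : β = α := hsjf β hβ α hα hβrel
  subst hβα
  obtain ⟨c, hc⟩ := prefix_const hxy (Set.mem_union_right _ hB)
  exact hnag (by rw [agreesAt, hc, applyHom_val_const hc h])

lemma mem_dconf_of {α : DBAtom Rel Attr Var Const} (hα : α ∈ Q)
    {e : DBFact Rel Attr Const} (heD : e ∈ D) (hrel : e.rel = α.rel)
    {xy : Set Attr × Set Attr} (hxy : xy ∈ primaryPrefix (chain α.rel) α)
    (h : Var → Const) (hlhs : ∀ A ∈ xy.1, e.val A = (applyHom h α).val A)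
    {B : Attr} (hB : B ∈ xy.2) (hne : e.val B ≠ (applyHom h α).val B) :
    e ∈ dconf chain Q D := by
  rw [dconf, Finset.mem_filter]
  refine ⟨heD, α, hα, hrel.symm, xy, hxy, ?_, B, hB, ?_⟩
  · intro A hA
    obtain ⟨c, hc⟩ := prefix_const hxy (Set.mem_union_left _ hA)
    rw [agreesAt, hc, hlhs A hA, applyHom_val_const hc h]
  · intro hag
    obtain ⟨c, hc⟩ := prefix_const hxy (Set.mem_union_right _ hB)
    rw [agreesAt, hc] at hag
    have hcE : c = e.val B := by injection hag
    exact hne (by rw [← hcE, applyHom_val_const hc h])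

lemma exists_fact (hchain : canonicalChain chain) (hsjf : sjf Q)
    {E : Finset (DBFact Rel Attr Const)}
    (hE : E ⊆ D \ dconf chain Q D) (hEsat : satFDs E (chainFDs chain))
    (hmax : ∀ F, E ⊆ F → F ⊆ D \ dconf chain Q D → satFDs F (chainFDs chain) → F = E)
    {h : Var → Const} (hh : ∀ α ∈ Q, applyHom h α ∈ D)
    {α : DBAtom Rel Attr Var Const} (hα : α ∈ Q) :
    ∃ f ∈ E, f.rel = α.rel ∧
      (∀ A ∈ primaryLhs (chain α.rel) α, f.val A = (applyHom h α).val A) ∧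
      (∀ xy ∈ primaryPrefix (chain α.rel) α, ∀ A ∈ xy.1 ∪ xy.2,
        f.val A = (applyHom h α).val A) := by
  set g := applyHom h α with hgdef
  have hgD' : g ∈ D \ dconf chain Q D :=
    Finset.mem_sdiff.mpr ⟨hh α hα, hom_notin_dconf hsjf hα h⟩
  by_cases hgE : g ∈ E
  · exact ⟨g, hgE, rfl, fun A _ => rfl, fun xy _ A _ => rfl⟩
  have hins : ¬ satFDs (insert g E) (chainFDs chain) := by
    intro hs
    exact hgE (hmax _ (Finset.subset_insert _ _)
      (Finset.insert_subset_iff.mpr ⟨hgD', hE⟩) hs ▸ Finset.mem_insert_self g E)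
  rw [satFDs] at hins
  push_neg at hins
  obtain ⟨φ, hφS, hφn⟩ := hins
  rw [satFD] at hφn
  push_neg at hφn
  obtain ⟨f1, hf1, f2, hf2, hr1, hr2, hagree, B, hB, hne⟩ := hφn
  have main : ∀ e ∈ E, φ.rel = α.rel → e.rel = φ.rel →
      (∀ A ∈ φ.lhs, e.val A = g.val A) → ∀ B' ∈ φ.rhs, e.val B' ≠ g.val B' →
      ∃ f ∈ E, f.rel = α.rel ∧
        (∀ A ∈ primaryLhs (chain α.rel) α, f.val A = g.val A) ∧
        (∀ xy ∈ primaryPrefix (chain α.rel) α, ∀ A ∈ xy.1 ∪ xy.2,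
          f.val A = g.val A) := by
    intro e heE hφrel herel hel B' hB' hneB
    have heD : e ∈ D := (Finset.mem_sdiff.mp (hE heE)).1
    have hend : e ∉ dconf chain Q D := (Finset.mem_sdiff.mp (hE heE)).2
    obtain ⟨xy, hxyc, hl, hr⟩ := hφS
    rw [hφrel] at hxyc
    rw [hl] at hel
    rw [hr] at hB'
    obtain ⟨j, hjlen, hj⟩ := List.mem_iff_getElem.mp hxyc
    set L := chain α.rel with hL
    set n := (primaryIdx L α).getD L.length with hn
    have hmemtake : ∀ k (hk2 : k < L.length), k < n → L[k]'hk2 ∈ primaryPrefix L α := by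
      intro k hk2 hk1
      rw [primaryPrefix_def, ← hn]
      have hk3 : k < (L.take n).length := by rw [List.length_take]; omega
      have : (L.take n)[k]'hk3 = L[k]'hk2 := by simp [List.getElem_take]
      rw [← this]
      exact List.getElem_mem _
    by_cases hjn : j < n
    · exact absurd (mem_dconf_of hα heD (herel.trans hφrel) (hj ▸ hmemtake j hjlen hjn) h
        hel hB' hneB) hend
    · push_neg at hjn
      have hex : ∃ i, chainVarAt L α i := by
        by_contra hno
        have hnone : primaryIdx L α = none := dif_neg hno
        rw [hn, hnone] at hjn
        simp at hjn
        omega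
      have hidx : primaryIdx L α = some (Nat.find hex) := dif_pos hex
      set i := Nat.find hex with hi
      have hni : n = i := by rw [hn, hidx]; rfl
      obtain ⟨xy0, hxy0, -⟩ := Nat.find_spec hex
      have hilen : i < L.length := by
        by_contra hle
        push_neg at hle
        rw [List.getElem?_eq_none hle] at hxy0
        cases hxy0
      have hxy0' : L[i]'hilen = xy0 := by
        rw [List.getElem?_eq_getElem hilen] at hxy0
        injection hxy0
      have hpl : primaryLhs L α = xy0.1 := by
        rw [primaryLhs, primaryFD, hidx]
        simp [Option.bind, hxy0]
        rw [show L[i]? = some xy0 from hxy0]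
      have pw := (hchain α.rel).1
      rw [List.pairwise_iff_getElem] at pw
      have hsubij : ∀ k, (hk : k < L.length) → k ≤ j → (L[k]'hk).1 ⊆ xy.1 := by
        intro k hk hkj
        rcases Nat.lt_or_ge k j with hlt | hge
        · have := pw k j hk hjlen hlt
          rw [hj] at this
          exact this.subset
        · have : k = j := le_antisymm hkj hge
          subst this
          rw [hj]
      refine ⟨e, heE, herel.trans hφrel, ?_, ?_⟩
      · intro A hA
        rw [hpl, ← hxy0'] at hA
        exact hel A (hsubij i hilen (by omega) hA)
      · intro xy' hxy' A hA
        obtain ⟨k, hk, hk2⟩ := List.mem_iff_getElem.mp hxy'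
        have hk' := hk
        rw [primaryPrefix_def, List.length_take, ← hn] at hk'
        have hkn : k < n := lt_of_lt_of_le hk' (min_le_left _ _)
        have hkL : k < L.length := lt_of_lt_of_le hk' (min_le_right _ _)
        have hk3 : L[k]'hkL = xy' := by
          rw [← hk2]
          exact (List.getElem_take).symm
        have hsubk : xy'.1 ⊆ xy.1 := by
          rw [← hk3]; exact hsubij k hkL (by omega)
        have helk : ∀ A' ∈ xy'.1, e.val A' = g.val A' := fun A' hA' => hel A' (hsubk hA')
        rw [Set.mem_union] at hA
        rcases hA with hA | hA
        · exact helk A hA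
        · by_contra hneA
          exact hend (mem_dconf_of hα heD (herel.trans hφrel) hxy' h helk hA hneA)
  rcases Finset.mem_insert.mp hf1 with h1 | h1 <;> rcases Finset.mem_insert.mp hf2 with h2 | h2
  · subst h1; subst h2; exact absurd rfl hne
  · subst h1
    exact main f2 h2 hr1.symm hr2 (fun A hA => (hagree A hA).symm) B hB (fun hq => hne hq.symm)
  · subst h2
    exact main f1 h1 hr2.symm hr1 hagree B hB hne
  · exact absurd (hEsat φ hφS f1 h1 f2 h2 hr1 hr2 hagree B hB) hne

lemma repair_entails (hchain : canonicalChain chain) (hsjf : sjf Q)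
    (hcomp : compPart chain Q = ∅) {E : Finset (DBFact Rel Attr Const)}
    (hE : E ⊆ D \ dconf chain Q D) (hEsat : satFDs E (chainFDs chain))
    (hmax : ∀ F, E ⊆ F → F ⊆ D \ dconf chain Q D → satFDs F (chainFDs chain) → F = E)
    (hDQ : entails D Q) : entails E Q := by
  obtain ⟨h, hh⟩ := hDQ
  have key : ∀ p : {β // β ∈ Q}, ∃ f, f ∈ E ∧ f.rel = p.1.rel ∧
      (∀ A ∈ primaryLhs (chain p.1.rel) p.1, f.val A = (applyHom h p.1).val A) ∧
      (∀ xy ∈ primaryPrefix (chain p.1.rel) p.1, ∀ A ∈ xy.1 ∪ xy.2,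
        f.val A = (applyHom h p.1).val A) := by
    intro p
    obtain ⟨f, h1, h2⟩ := exists_fact hchain hsjf hE hEsat hmax hh p.2
    exact ⟨f, h1, h2⟩
  choose F hF1 hF2 hF3 hF4 using key
  have hncomp : ∀ β ∈ Q, ¬ (∃ A, A ∉ primaryLhs (chain β.rel) β ∧
      ((∃ c, β.val A = DBTerm.const c) ∨ ∃ v, β.val A = DBTerm.var v ∧ liaison Q v) ∧
      ∀ xy ∈ primaryPrefix (chain β.rel) β, A ∉ xy.1 ∪ xy.2) := by
    intro β hβ hcond
    have : β ∈ compPart chain Q := Finset.mem_filter.mpr ⟨hβ, hcond⟩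
    rw [hcomp] at this
    exact absurd this (Finset.notMem_empty β)
  have hvar_not_prefix : ∀ (β : DBAtom Rel Attr Var Const) (A : Attr) (v : Var),
      β.val A = DBTerm.var v → ∀ xy ∈ primaryPrefix (chain β.rel) β, A ∉ xy.1 ∪ xy.2 := by
    intro β A v hv xy hxy hmem
    obtain ⟨c, hc⟩ := prefix_const hxy hmem
    rw [hv] at hc
    cases hc
  classical
  refine ⟨fun v => if hv : ∃ p : {β // β ∈ Q} × Attr,
      p.1.1.val p.2 = DBTerm.var v ∧ p.2 ∉ primaryLhs (chain p.1.1.rel) p.1.1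
    then (F hv.choose.1).val hv.choose.2 else h v, ?_⟩
  intro α hα
  set h' : Var → Const := fun v => if hv : ∃ p : {β // β ∈ Q} × Attr,
      p.1.1.val p.2 = DBTerm.var v ∧ p.2 ∉ primaryLhs (chain p.1.1.rel) p.1.1
    then (F hv.choose.1).val hv.choose.2 else h v with hh'
  set p₀ : {β // β ∈ Q} := ⟨α, hα⟩ with hp₀
  have hfa : applyHom h' α = F p₀ := by
    apply fact_ext
    · exact (hF2 p₀).symm
    · funext A
      cases hc : α.val A with
      | const c =>
        rw [applyHom_val_const hc h']
        have hor : A ∈ primaryLhs (chain α.rel) α ∨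
            ∃ xy ∈ primaryPrefix (chain α.rel) α, A ∈ xy.1 ∪ xy.2 := by
          by_contra hcon
          push_neg at hcon
          exact hncomp α hα ⟨A, hcon.1, Or.inl ⟨c, hc⟩, hcon.2⟩
        rcases hor with hA | ⟨xy, hxy, hAm⟩
        · exact ((hF3 p₀ A hA).trans (applyHom_val_const hc h)).symm
        · exact ((hF4 p₀ xy hxy A hAm).trans (applyHom_val_const hc h)).symm
      | var v =>
        rw [applyHom_val_var hc h']
        by_cases hApl : A ∈ primaryLhs (chain α.rel) α
        · have hvfalse : ¬ ∃ p : {β // β ∈ Q} × Attr,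
              p.1.1.val p.2 = DBTerm.var v ∧ p.2 ∉ primaryLhs (chain p.1.1.rel) p.1.1 := by
            rintro ⟨p, hp1, hp2⟩
            have hne : p.1.1 ≠ α ∨ p.2 ≠ A := by
              by_contra hcc
              push_neg at hcc
              rw [hcc.1, hcc.2] at hp2
              exact hp2 hApl
            have hli : liaison Q v := ⟨p.1.1, p.1.2, α, hα, p.2, A, hp1, hc, hne⟩
            exact hncomp p.1.1 p.1.2
              ⟨p.2, hp2, Or.inr ⟨v, hp1, hli⟩, hvar_not_prefix p.1.1 p.2 v hp1⟩
          rw [hh']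
          simp only [dif_neg hvfalse]
          exact ((hF3 p₀ A hApl).trans (applyHom_val_var hc h)).symm
        · have hv : ∃ p : {β // β ∈ Q} × Attr,
              p.1.1.val p.2 = DBTerm.var v ∧ p.2 ∉ primaryLhs (chain p.1.1.rel) p.1.1 :=
            ⟨(p₀, A), hc, hApl⟩
          have hspec := hv.choose_spec
          have hpeq : hv.choose = (p₀, A) := by
            by_contra hnep
            have hne' : hv.choose.1.1 ≠ α ∨ hv.choose.2 ≠ A := by
              by_contra hcc
              push_neg at hcc
              exact hnep (Prod.ext_iff.mpr ⟨Subtype.ext hcc.1, hcc.2⟩)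
            have hli : liaison Q v :=
              ⟨hv.choose.1.1, hv.choose.1.2, α, hα, hv.choose.2, A, hspec.1, hc, hne'⟩
            exact hncomp α hα ⟨A, hApl, Or.inr ⟨v, hc, hli⟩, hvar_not_prefix α A v hc⟩
          rw [hh']
          simp only [dif_pos hv]
          rw [hpeq]
  rw [hfa]
  exact hF1 p₀

end Aux

/-- For a canonical set of FDs with an LHS chain and an SJFCQ `Q` with empty complex
part and `D ⊨ Q`: `|rep(D,Σ,Q)| = |rep(D \ D_conf,Σ)|`; equivalently, every repair of
`D \ D_conf` entails `Q`, and the repairs of `D` entailing `Q` are exactly the repairs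
of `D \ D_conf`. -/
theorem stmt_8 {Rel Attr Var Const : Type*}
    (chain : Rel → List (Set Attr × Set Attr)) (hchain : canonicalChain chain)
    (Q : Finset (DBAtom Rel Attr Var Const)) (hQne : Q.Nonempty) (hsjf : sjf Q)
    (D : Finset (DBFact Rel Attr Const))
    (hcomp : compPart chain Q = ∅) (hDQ : entails D Q) :
    (repQ D (chainFDs chain) Q).card = (rep (D \ dconf chain Q D) (chainFDs chain)).card ∧
    (∀ E ∈ rep (D \ dconf chain Q D) (chainFDs chain), entails E Q) ∧
    repQ D (chainFDs chain) Q = rep (D \ dconf chain Q D) (chainFDs chain) := by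
  classical
  set S := chainFDs chain with hS
  set D' := D \ dconf chain Q D with hD'
  have hD'sub : D' ⊆ D := Finset.sdiff_subset
  have hrep_iff : ∀ (D₀ : Finset (DBFact Rel Attr Const)) (E : Finset _),
      E ∈ rep D₀ S ↔ isRepair S D₀ E := by
    intro D₀ E
    rw [rep, Finset.mem_filter, Finset.mem_powerset]
    exact ⟨fun h => h.2, fun h => ⟨h.1, h⟩⟩
  have hmain : repQ D S Q = rep D' S := by
    ext E
    rw [repQ, Finset.mem_filter, hrep_iff D E, hrep_iff D' E]
    constructor
    · rintro ⟨⟨hED, hEsat, hEmax⟩, hent⟩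
      obtain ⟨h', hh'⟩ := hent
      have hED' : E ⊆ D' := by
        intro e heE
        rw [hD', Finset.mem_sdiff]
        refine ⟨hED heE, fun hconf => ?_⟩
        rw [dconf, Finset.mem_filter] at hconf
        obtain ⟨-, β, hβ, hβrel, xy, hxy, hag, B, hB, hnag⟩ := hconf
        exact conflict_false hxy hβrel.symm hag hB hnag heE (hh' β hβ) hEsat
      exact ⟨hED', hEsat, fun F hEF hFD' hFsat => hEmax F hEF (hFD'.trans hD'sub) hFsat⟩
    · rintro ⟨hED', hEsat, hEmax⟩
      have hent : entails E Q := repair_entails hchain hsjf hcomp hED' hEsat hEmax hDQ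
      obtain ⟨h', hh'⟩ := hent
      refine ⟨⟨hED'.trans hD'sub, hEsat, ?_⟩, ⟨h', hh'⟩⟩
      intro F hEF hFD hFsat
      apply hEmax F hEF ?_ hFsat
      intro f hf
      rw [hD', Finset.mem_sdiff]
      refine ⟨hFD hf, fun hconf => ?_⟩
      rw [dconf, Finset.mem_filter] at hconf
      obtain ⟨-, β, hβ, hβrel, xy, hxy, hag, B, hB, hnag⟩ := hconf
      exact conflict_false hxy hβrel.symm hag hB hnag hf (hEF (hh' β hβ)) hFsat
  refine ⟨by rw [hmain], ?_, hmain⟩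
  intro E hEmem
  obtain ⟨hED', hEsat, hEmax⟩ := (hrep_iff D' E).mp hEmem
  exact repair_entails hchain hsjf hcomp hED' hEsat hEmax hDQ
end
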